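/- For 0 ≤ σ₁ < σ/2 < σ₂ ≤ σ there exist ε* > 0 and constants 0 < c ≤ C such that for all r ∈ (0,ε*]: c r^{2(σ-σ₁)} ≤ -λ₁(r) ≤ C r^{2(σ-σ₁)}, c r^{2σ₁} ≤ -λ₂(r) ≤ C r^{2σ₁}, and c r^{2σ₁} ≤ λ₁(r) − λ₂(r) ≤ C r^{2σ₁}, where λ_{1,2}(r) = ½(−r^{2σ₁} − r^{2σ₂} ± √((r^{2σ₁}+r^{2σ₂})² − 4 r^{2σ})). -/

import Mathlib

/-!
With `a = r^(2σ₁)`, `b = r^(2σ₂)` and `q = r^(2(σ-σ₁))` we have `r^(2σ) = a q`, so `λ₁, λ₂` are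
the roots of `x² + (a + b) x + a q`. Since `σ₁ < σ₂` and `σ₁ < σ - σ₁`, for small `r` both `b` and
`16 q` are at most `a`; then the square root of the discriminant lies between `a/2` and `a + b`,
which pins `-λ₂` and `λ₁ - λ₂` to the scale `a`, and Vieta's `λ₁ λ₂ = a q` pins `-λ₁` to the
scale `q`.
-/

open Real Set

/-- The characteristic roots `λ₁ ≥ λ₂` (for real discriminant). -/
noncomputable def lamPlus (σ σ₁ σ₂ r : ℝ) : ℝ :=
  (-(r ^ (2*σ₁)) - r ^ (2*σ₂) + Real.sqrt ((r ^ (2*σ₁) + r ^ (2*σ₂))^2 - 4 * r ^ (2*σ))) / 2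

noncomputable def lamMinus (σ σ₁ σ₂ r : ℝ) : ℝ :=
  (-(r ^ (2*σ₁)) - r ^ (2*σ₂) - Real.sqrt ((r ^ (2*σ₁) + r ^ (2*σ₂))^2 - 4 * r ^ (2*σ))) / 2

theorem exists_rpow_le_mul_rpow {α β c : ℝ} (hαβ : α < β) (hc : 0 < c) :
    ∃ ε > 0, ∀ r ∈ Ioc (0 : ℝ) ε, r ^ β ≤ c * r ^ α := by
  refine ⟨c ^ (β - α)⁻¹, rpow_pos_of_pos hc _, ?_⟩
  rintro r ⟨hr, hrε⟩
  have hsmall : r ^ (β - α) ≤ c := (le_rpow_inv_iff_of_pos hr.le hc.le (by linarith)).1 hrε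
  calc r ^ β = r ^ (β - α) * r ^ α := by rw [← rpow_add hr, sub_add_cancel]
    _ ≤ c * r ^ α := by gcongr

section QuadraticRoots

variable {a b q : ℝ}

theorem sqrt_discrim_bounds (ha : 0 ≤ a) (hb : 0 ≤ b) (hq : 0 ≤ q) (hqa : 16 * q ≤ a) :
    a / 2 ≤ √((a + b) ^ 2 - 4 * (a * q)) ∧ √((a + b) ^ 2 - 4 * (a * q)) ≤ a + b := by
  refine ⟨le_sqrt_of_sq_le (by nlinarith [mul_le_mul_of_nonneg_left hqa ha]), ?_⟩
  exact sqrt_le_iff.2 ⟨by positivity, by nlinarith [mul_nonneg ha hq]⟩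

theorem small_root_bounds (ha : 0 ≤ a) (hb : 0 ≤ b) (hba : b ≤ a) (hq : 0 ≤ q)
    (hqa : 16 * q ≤ a) :
    q ≤ a + b - √((a + b) ^ 2 - 4 * (a * q)) ∧ a + b - √((a + b) ^ 2 - 4 * (a * q)) ≤ 4 * q := by
  obtain ⟨hD₁, hD₂⟩ := sqrt_discrim_bounds ha hb hq hqa
  set D := √((a + b) ^ 2 - 4 * (a * q))
  have hD_sq : D ^ 2 = (a + b) ^ 2 - 4 * (a * q) := sq_sqrt (by nlinarith)
  have hvieta : (a + b - D) * (a + b + D) = 4 * (a * q) := by linear_combination -hD_sq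
  have hsmall : 0 ≤ a + b - D := by linarith
  constructor
  · nlinarith [mul_le_mul_of_nonneg_left (show a + b + D ≤ 4 * a by linarith) hsmall]
  · nlinarith [mul_le_mul_of_nonneg_left (show a ≤ a + b + D by linarith) hsmall]

end QuadraticRoots

theorem stmt13_general (σ σ₁ σ₂ : ℝ) (h12 : σ₁ < σ / 2)
    (h22 : σ / 2 < σ₂) :
    ∃ εs > 0, ∃ c > 0, ∃ C : ℝ, c ≤ C ∧ ∀ r ∈ Set.Ioc (0:ℝ) εs,
      (c * r ^ (2*(σ-σ₁)) ≤ -lamPlus σ σ₁ σ₂ r ∧ -lamPlus σ σ₁ σ₂ r ≤ C * r ^ (2*(σ-σ₁))) ∧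
      (c * r ^ (2*σ₁) ≤ -lamMinus σ σ₁ σ₂ r ∧ -lamMinus σ σ₁ σ₂ r ≤ C * r ^ (2*σ₁)) ∧
      (c * r ^ (2*σ₁) ≤ lamPlus σ σ₁ σ₂ r - lamMinus σ σ₁ σ₂ r ∧
        lamPlus σ σ₁ σ₂ r - lamMinus σ σ₁ σ₂ r ≤ C * r ^ (2*σ₁)) := by
  obtain ⟨ε₁, hε₁, hb_le⟩ := exists_rpow_le_mul_rpow (by linarith : 2 * σ₁ < 2 * σ₂) one_pos
  obtain ⟨ε₂, hε₂, hq_le⟩ :=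
    exists_rpow_le_mul_rpow (by linarith : 2 * σ₁ < 2 * (σ - σ₁)) (by norm_num : (0 : ℝ) < 1 / 16)
  refine ⟨min ε₁ ε₂, lt_min hε₁ hε₂, 1 / 2, by norm_num, 2, by norm_num, ?_⟩
  rintro r ⟨hr, hrε⟩
  have hba := hb_le r ⟨hr, hrε.trans (min_le_left _ _)⟩
  have hqa := hq_le r ⟨hr, hrε.trans (min_le_right _ _)⟩
  have ha := rpow_pos_of_pos hr (2 * σ₁)
  have hb := rpow_nonneg hr.le (2 * σ₂)
  have hq := rpow_nonneg hr.le (2 * (σ - σ₁))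
  have hprod : r ^ (2 * σ) = r ^ (2 * σ₁) * r ^ (2 * (σ - σ₁)) := by
    rw [← rpow_add hr]; ring_nf
  obtain ⟨hD₁, hD₂⟩ := sqrt_discrim_bounds ha.le hb hq (by linarith)
  obtain ⟨hX₁, hX₂⟩ := small_root_bounds ha.le hb (by linarith) hq (by linarith)
  simp only [lamPlus, lamMinus, hprod]
  refine ⟨⟨?_, ?_⟩, ⟨?_, ?_⟩, ?_, ?_⟩ <;> linarith

theorem stmt13 (σ σ₁ σ₂ : ℝ) (hσ : 1 ≤ σ) (hσ₁ : 0 ≤ σ₁) (h12 : σ₁ < σ / 2)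
    (h22 : σ / 2 < σ₂) (h2σ : σ₂ ≤ σ) :
    ∃ εs > 0, ∃ c > 0, ∃ C : ℝ, c ≤ C ∧ ∀ r ∈ Set.Ioc (0:ℝ) εs,
      (c * r ^ (2*(σ-σ₁)) ≤ -lamPlus σ σ₁ σ₂ r ∧ -lamPlus σ σ₁ σ₂ r ≤ C * r ^ (2*(σ-σ₁))) ∧
      (c * r ^ (2*σ₁) ≤ -lamMinus σ σ₁ σ₂ r ∧ -lamMinus σ σ₁ σ₂ r ≤ C * r ^ (2*σ₁)) ∧
      (c * r ^ (2*σ₁) ≤ lamPlus σ σ₁ σ₂ r - lamMinus σ σ₁ σ₂ r ∧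
        lamPlus σ σ₁ σ₂ r - lamMinus σ σ₁ σ₂ r ≤ C * r ^ (2*σ₁)) :=
  stmt13_general σ σ₁ σ₂ h12 h22
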